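/- The energy of the mKdV breather is E[B_{α,β}] = (1/2)∫_ℝ (∂_x B)² − (1/4)∫_ℝ B⁴ = (4/3)βγ, where γ = 3α² − β², for all α, β > 0 and all t ∈ ℝ. -/

import Mathlib

/-!
Write `B = 2√2 θ'` with `θ = arg (F + iG)`, `F = cosh (β (x + c₂))`, `G = (β/α) sin (α (x + c₁))`.
Since `F'' = β² F`, `G'' = -α² G` and `F'² + G'² = β² F² - α² G²` (Hirota's bilinear form of the
breather), the logarithmic derivative `p + iθ'` of `F + iG` satisfies, with
`κ = (β² + α²)/2` and `δ = (β² - α²)/2`,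
  `p' = 2θ'²`,  `θ'' = -2pθ' - κ sin 2θ`,  `p² + θ'² = δ + κ cos 2θ`.
These make `θ''² - 4θ'⁴` the derivative of `H = p³/3 - pθ'² - δp - κθ' sin 2θ`.
As `x → ±∞`, `θ'` and `sin 2θ` vanish while `p → ±β`, so the energy `4 ∫ (θ''² - 4θ'⁴)` equals
`4 (H(∞) - H(-∞)) = 8 (β³/3 - δβ) = (4/3) β (3α² - β²)`.
-/

open MeasureTheory

noncomputable def breather (α β x₁ x₂ : ℝ) (t x : ℝ) : ℝ :=
  2 * Real.sqrt 2 *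
    deriv (fun y : ℝ =>
      Real.arctan ((β / α) * Real.sin (α * (y + (α ^ 2 - 3 * β ^ 2) * t + x₁)) /
        Real.cosh (β * (y + (3 * α ^ 2 - β ^ 2) * t + x₂)))) x

open Real Filter Topology

namespace Real

lemma sq_le_sinh_sq (y : ℝ) : y ^ 2 ≤ sinh y ^ 2 := by
  rcases le_total 0 y with h | h
  · nlinarith [self_le_sinh_iff.2 h]
  · nlinarith [sinh_le_self_iff.2 h]

lemma one_add_sq_le_cosh_sq (y : ℝ) : 1 + y ^ 2 ≤ cosh y ^ 2 := by
  rw [cosh_sq']; linarith [sq_le_sinh_sq y]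

lemma abs_le_cosh (y : ℝ) : |y| ≤ cosh y :=
  abs_le_of_sq_le_sq (by linarith [one_add_sq_le_cosh_sq y]) (cosh_pos y).le

lemma tanh_eq_exp (y : ℝ) : tanh y = (exp (2 * y) - 1) / (exp (2 * y) + 1) := by
  rw [tanh_eq, exp_neg, two_mul, exp_add]
  field_simp

lemma tendsto_tanh_atBot : Tendsto tanh atBot (𝓝 (-1)) := by
  have h : Tendsto (fun y => exp (2 * y)) atBot (𝓝 0) :=
    tendsto_exp_atBot.comp (tendsto_id.const_mul_atBot two_pos)
  have := (h.sub_const 1).div (h.add_const 1) (by norm_num)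
  rw [zero_sub, zero_add, div_one] at this
  exact this.congr fun y => (tanh_eq_exp y).symm

lemma tendsto_tanh_atTop : Tendsto tanh atTop (𝓝 1) := by
  simpa [Function.comp_def, tanh_neg] using (tendsto_tanh_atBot.comp tendsto_neg_atTop_atBot).neg

end Real

lemma hasDerivAt_mul_add (k c x : ℝ) : HasDerivAt (fun y => k * (y + c)) k x := by
  simpa using ((hasDerivAt_id x).add_const c).const_mul k

lemma integrable_sq_of_abs_le_inv_cosh {f : ℝ → ℝ} (hf : Continuous f) {K β c : ℝ}
    (hβ : β ≠ 0) (h : ∀ x, |f x| ≤ K * (cosh (β * (x + c)))⁻¹) :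
    Integrable fun x => f x ^ 2 := by
  refine ((integrable_inv_one_add_sq.comp_mul_left' hβ).comp_add_right c
    |>.const_mul (K ^ 2)).mono' (hf.pow 2).aestronglyMeasurable (.of_forall fun x => ?_)
  rw [Real.norm_eq_abs, abs_pow]
  calc |f x| ^ 2 ≤ (K * (cosh (β * (x + c)))⁻¹) ^ 2 := pow_le_pow_left₀ (abs_nonneg _) (h x) 2
    _ = K ^ 2 * (cosh (β * (x + c)) ^ 2)⁻¹ := by ring
    _ ≤ K ^ 2 * (1 + (β * (x + c)) ^ 2)⁻¹ :=
      mul_le_mul_of_nonneg_left (inv_anti₀ (by positivity) (one_add_sq_le_cosh_sq _)) (sq_nonneg K)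

/-- `F + iG` with `F'' = a F` and `G'' = -b G`; `bilinear` is Hirota's equation
`D_x² (F·F + G·G) = 0`, i.e. `F F'' - F'² + G G'' - G'² = 0`. -/
structure HirotaPair (a b : ℝ) where
  F : ℝ → ℝ
  G : ℝ → ℝ
  F' : ℝ → ℝ
  G' : ℝ → ℝ
  hasDerivAt_F : ∀ x, HasDerivAt F (F' x) x
  hasDerivAt_F' : ∀ x, HasDerivAt F' (a * F x) x
  hasDerivAt_G : ∀ x, HasDerivAt G (G' x) x
  hasDerivAt_G' : ∀ x, HasDerivAt G' (-(b * G x)) x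
  bilinear : ∀ x, F' x ^ 2 + G' x ^ 2 = a * F x ^ 2 - b * G x ^ 2
  F_ne_zero : ∀ x, F x ≠ 0

namespace HirotaPair

variable {a b : ℝ} (P : HirotaPair a b)

noncomputable section

/- For `f = F + iG`: `logNormDeriv = (log |f|)'`, `argDeriv = (arg f)'` and
`cosTwoArg + i sinTwoArg = f / conj f`. -/

def normSq (x : ℝ) : ℝ := P.F x ^ 2 + P.G x ^ 2

def logNormDeriv (x : ℝ) : ℝ := (P.F x * P.F' x + P.G x * P.G' x) / P.normSq x

def argDeriv (x : ℝ) : ℝ := (P.F x * P.G' x - P.G x * P.F' x) / P.normSq x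

def cosTwoArg (x : ℝ) : ℝ := (P.F x ^ 2 - P.G x ^ 2) / P.normSq x

def sinTwoArg (x : ℝ) : ℝ := 2 * P.F x * P.G x / P.normSq x

def argSecondDeriv (x : ℝ) : ℝ :=
  -(2 * P.logNormDeriv x * P.argDeriv x) - (a + b) / 2 * P.sinTwoArg x

def energyPrimitive (x : ℝ) : ℝ :=
  P.logNormDeriv x ^ 3 / 3 - P.logNormDeriv x * P.argDeriv x ^ 2
    - (a - b) / 2 * P.logNormDeriv x - (a + b) / 2 * P.argDeriv x * P.sinTwoArg x

end

lemma normSq_pos (x : ℝ) : 0 < P.normSq x := by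
  have := P.F_ne_zero x
  unfold normSq; positivity

lemma hasDerivAt_normSq (x : ℝ) :
    HasDerivAt P.normSq (2 * (P.F x * P.F' x + P.G x * P.G' x)) x := by
  refine (((P.hasDerivAt_F x).fun_pow 2).fun_add ((P.hasDerivAt_G x).fun_pow 2)).congr_deriv ?_
  push_cast; ring

lemma hasDerivAt_logNormDeriv (x : ℝ) :
    HasDerivAt P.logNormDeriv (2 * P.argDeriv x ^ 2) x := by
  refine ((((P.hasDerivAt_F x).fun_mul (P.hasDerivAt_F' x)).fun_add
    ((P.hasDerivAt_G x).fun_mul (P.hasDerivAt_G' x))).fun_div (P.hasDerivAt_normSq x)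
    (P.normSq_pos x).ne').congr_deriv ?_
  have hW := (P.normSq_pos x).ne'
  simp only [argDeriv, normSq] at hW ⊢
  field_simp
  linear_combination (-(P.F x ^ 2 + P.G x ^ 2)) * P.bilinear x

lemma hasDerivAt_argDeriv (x : ℝ) : HasDerivAt P.argDeriv (P.argSecondDeriv x) x := by
  refine ((((P.hasDerivAt_F x).fun_mul (P.hasDerivAt_G' x)).fun_sub
    ((P.hasDerivAt_G x).fun_mul (P.hasDerivAt_F' x))).fun_div (P.hasDerivAt_normSq x)
    (P.normSq_pos x).ne').congr_deriv ?_
  have hW := (P.normSq_pos x).ne'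
  simp only [argSecondDeriv, logNormDeriv, argDeriv, sinTwoArg, normSq] at hW ⊢
  field_simp
  ring

lemma hasDerivAt_sinTwoArg (x : ℝ) :
    HasDerivAt P.sinTwoArg (2 * P.argDeriv x * P.cosTwoArg x) x := by
  refine ((((P.hasDerivAt_F x).const_mul 2).fun_mul (P.hasDerivAt_G x)).fun_div
    (P.hasDerivAt_normSq x) (P.normSq_pos x).ne').congr_deriv ?_
  have hW := (P.normSq_pos x).ne'
  simp only [argDeriv, cosTwoArg, normSq] at hW ⊢
  field_simp
  ring

lemma logNormDeriv_sq_add_argDeriv_sq (x : ℝ) :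
    P.logNormDeriv x ^ 2 + P.argDeriv x ^ 2 = (a - b) / 2 + (a + b) / 2 * P.cosTwoArg x := by
  have hW := (P.normSq_pos x).ne'
  simp only [logNormDeriv, argDeriv, cosTwoArg, normSq] at hW ⊢
  field_simp
  linear_combination (2 * (P.F x ^ 2 + P.G x ^ 2)) * P.bilinear x

lemma hasDerivAt_energyPrimitive (x : ℝ) :
    HasDerivAt P.energyPrimitive (P.argSecondDeriv x ^ 2 - 4 * P.argDeriv x ^ 4) x := by
  have hp := P.hasDerivAt_logNormDeriv x
  have hq := P.hasDerivAt_argDeriv x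
  have hS := P.hasDerivAt_sinTwoArg x
  refine ((((hp.fun_pow 3).div_const 3).fun_sub (hp.fun_mul (hq.fun_pow 2))).fun_sub
    (hp.const_mul _) |>.fun_sub ((hq.const_mul _).fun_mul hS)).congr_deriv ?_
  simp only [argSecondDeriv]
  push_cast
  linear_combination (2 * P.argDeriv x ^ 2) * P.logNormDeriv_sq_add_argDeriv_sq x

lemma hasDerivAt_arctan_div (x : ℝ) :
    HasDerivAt (fun y => arctan (P.G y / P.F y)) (P.argDeriv x) x := by
  refine (((P.hasDerivAt_G x).fun_div (P.hasDerivAt_F x) (P.F_ne_zero x)).arctan).congr_deriv ?_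
  have hW := (P.normSq_pos x).ne'
  have hF := P.F_ne_zero x
  simp only [argDeriv, normSq] at hW ⊢
  field_simp

lemma logNormDeriv_eq_ratios (x : ℝ) : P.logNormDeriv x
    = (P.F' x / P.F x + P.G x / P.F x * (P.G' x / P.F x)) / (1 + (P.G x / P.F x) ^ 2) := by
  have hF := P.F_ne_zero x
  have hW := (P.normSq_pos x).ne'
  rw [logNormDeriv, normSq] at *
  field_simp

lemma argDeriv_eq_ratios (x : ℝ) : P.argDeriv x
    = (P.G' x / P.F x - P.G x / P.F x * (P.F' x / P.F x)) / (1 + (P.G x / P.F x) ^ 2) := by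
  have hF := P.F_ne_zero x
  have hW := (P.normSq_pos x).ne'
  rw [argDeriv, normSq] at *
  field_simp

lemma sinTwoArg_eq_ratios (x : ℝ) :
    P.sinTwoArg x = 2 * (P.G x / P.F x) / (1 + (P.G x / P.F x) ^ 2) := by
  have hF := P.F_ne_zero x
  have hW := (P.normSq_pos x).ne'
  rw [sinTwoArg, normSq] at *
  field_simp

lemma tendsto_energyPrimitive {l : Filter ℝ} {ℓ : ℝ}
    (hF' : Tendsto (fun x => P.F' x / P.F x) l (𝓝 ℓ))
    (hG : Tendsto (fun x => P.G x / P.F x) l (𝓝 0))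
    (hG' : Tendsto (fun x => P.G' x / P.F x) l (𝓝 0)) :
    Tendsto P.energyPrimitive l (𝓝 (ℓ ^ 3 / 3 - (a - b) / 2 * ℓ)) := by
  have hden : Tendsto (fun x => 1 + (P.G x / P.F x) ^ 2) l (𝓝 1) := by
    simpa using (hG.pow 2).const_add 1
  have hp : Tendsto P.logNormDeriv l (𝓝 ℓ) := by
    rw [funext P.logNormDeriv_eq_ratios]
    simpa [Pi.div_def] using (hF'.add (hG.mul hG')).div hden one_ne_zero
  have hq : Tendsto P.argDeriv l (𝓝 0) := by
    rw [funext P.argDeriv_eq_ratios]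
    simpa [Pi.div_def] using (hG'.sub (hG.mul hF')).div hden one_ne_zero
  have hS : Tendsto P.sinTwoArg l (𝓝 0) := by
    rw [funext P.sinTwoArg_eq_ratios]
    simpa [Pi.div_def] using (hG.const_mul 2).div hden one_ne_zero
  rw [show ℓ ^ 3 / 3 - (a - b) / 2 * ℓ
      = ℓ ^ 3 / 3 - ℓ * 0 ^ 2 - (a - b) / 2 * ℓ - (a + b) / 2 * 0 * 0 by ring]
  exact (((hp.pow 3).div_const 3).sub (hp.mul (hq.pow 2))).sub (hp.const_mul ((a - b) / 2))
    |>.sub ((hq.const_mul ((a + b) / 2)).mul hS)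

lemma continuous_logNormDeriv : Continuous P.logNormDeriv :=
  continuous_iff_continuousAt.2 fun x => (P.hasDerivAt_logNormDeriv x).continuousAt

lemma continuous_argDeriv : Continuous P.argDeriv :=
  continuous_iff_continuousAt.2 fun x => (P.hasDerivAt_argDeriv x).continuousAt

lemma continuous_sinTwoArg : Continuous P.sinTwoArg :=
  continuous_iff_continuousAt.2 fun x => (P.hasDerivAt_sinTwoArg x).continuousAt

lemma cosTwoArg_le_one (x : ℝ) : P.cosTwoArg x ≤ 1 := by
  rw [cosTwoArg, div_le_one (P.normSq_pos x), normSq]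
  linarith [sq_nonneg (P.G x)]

lemma logNormDeriv_sq_add_argDeriv_sq_le (hab : 0 ≤ a + b) (x : ℝ) :
    P.logNormDeriv x ^ 2 + P.argDeriv x ^ 2 ≤ a := by
  rw [P.logNormDeriv_sq_add_argDeriv_sq]
  nlinarith [P.cosTwoArg_le_one x]

lemma integrable_argDeriv_pow_four (hab : 0 ≤ a + b)
    (hq : Integrable fun x => P.argDeriv x ^ 2) : Integrable fun x => P.argDeriv x ^ 4 := by
  refine (hq.const_mul a).mono' (P.continuous_argDeriv.pow 4).aestronglyMeasurable
    (.of_forall fun x => ?_)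
  have := P.logNormDeriv_sq_add_argDeriv_sq_le hab x
  rw [Real.norm_of_nonneg (by positivity)]
  nlinarith [sq_nonneg (P.logNormDeriv x), sq_nonneg (P.argDeriv x)]

lemma integrable_argSecondDeriv_sq (hab : 0 ≤ a + b)
    (hq : Integrable fun x => P.argDeriv x ^ 2) (hS : Integrable fun x => P.sinTwoArg x ^ 2) :
    Integrable fun x => P.argSecondDeriv x ^ 2 := by
  have hcont : Continuous P.argSecondDeriv := by
    have := P.continuous_logNormDeriv
    have := P.continuous_argDeriv
    have := P.continuous_sinTwoArg
    unfold argSecondDeriv; fun_prop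
  refine ((hq.const_mul (8 * a)).add (hS.const_mul (2 * ((a + b) / 2) ^ 2))).mono'
    (hcont.pow 2).aestronglyMeasurable (.of_forall fun x => ?_)
  have := P.logNormDeriv_sq_add_argDeriv_sq_le hab x
  rw [Real.norm_of_nonneg (by positivity), argSecondDeriv, Pi.add_apply]
  nlinarith [sq_nonneg (P.argDeriv x ^ 2),
    sq_nonneg (2 * P.logNormDeriv x * P.argDeriv x - (a + b) / 2 * P.sinTwoArg x),
    mul_le_mul_of_nonneg_right this (sq_nonneg (P.argDeriv x))]

lemma abs_argDeriv_le (x : ℝ) :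
    |P.argDeriv x| ≤ |P.G' x / P.F x| + |P.G x / P.F x| * |P.F' x / P.F x| := by
  have hF := P.F_ne_zero x
  calc |P.argDeriv x| = |P.F x * P.G' x - P.G x * P.F' x| / P.normSq x := by
        rw [argDeriv, abs_div, abs_of_pos (P.normSq_pos x)]
    _ ≤ |P.F x * P.G' x - P.G x * P.F' x| / P.F x ^ 2 :=
        div_le_div_of_nonneg_left (abs_nonneg _) (by positivity)
          (le_add_of_nonneg_right (sq_nonneg _))
    _ = |P.G' x / P.F x - P.G x / P.F x * (P.F' x / P.F x)| := by
        rw [← abs_of_pos (by positivity : 0 < P.F x ^ 2), ← abs_div]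
        congr 1
        field_simp
    _ ≤ |P.G' x / P.F x| + |P.G x / P.F x| * |P.F' x / P.F x| := by
        rw [← abs_mul]; exact abs_sub _ _

lemma abs_sinTwoArg_le (x : ℝ) : |P.sinTwoArg x| ≤ 2 * |P.G x / P.F x| := by
  have hF := P.F_ne_zero x
  calc |P.sinTwoArg x| = |2 * P.F x * P.G x| / P.normSq x := by
        rw [sinTwoArg, abs_div, abs_of_pos (P.normSq_pos x)]
    _ ≤ |2 * P.F x * P.G x| / P.F x ^ 2 :=
        div_le_div_of_nonneg_left (abs_nonneg _) (by positivity)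
          (le_add_of_nonneg_right (sq_nonneg _))
    _ = 2 * |P.G x / P.F x| := by
        have : |P.F x| ≠ 0 := abs_ne_zero.2 hF
        rw [abs_mul, abs_mul, abs_two, abs_div, ← sq_abs (P.F x)]
        field_simp

end HirotaPair

noncomputable def breatherPair (α β c₁ c₂ : ℝ) (hα : α ≠ 0) : HirotaPair (β ^ 2) (α ^ 2) where
  F x := cosh (β * (x + c₂))
  G x := β / α * sin (α * (x + c₁))
  F' x := β * sinh (β * (x + c₂))
  G' x := β * cos (α * (x + c₁))
  hasDerivAt_F x := by simpa [mul_comm] using (hasDerivAt_mul_add β c₂ x).cosh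
  hasDerivAt_F' x := ((hasDerivAt_mul_add β c₂ x).sinh.const_mul β).congr_deriv (by ring)
  hasDerivAt_G x :=
    ((hasDerivAt_mul_add α c₁ x).sin.const_mul (β / α)).congr_deriv (by field_simp)
  hasDerivAt_G' x :=
    ((hasDerivAt_mul_add α c₁ x).cos.const_mul β).congr_deriv (by field_simp)
  bilinear x := by
    field_simp
    linear_combination β ^ 2 * (sin_sq_add_cos_sq (α * (x + c₁)) - cosh_sq' (β * (x + c₂)))
  F_ne_zero x := (cosh_pos _).ne'

section BreatherPair

variable {α β c₁ c₂ : ℝ} (hα : α ≠ 0)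

lemma breatherPair_F'_div_F (x : ℝ) :
    (breatherPair α β c₁ c₂ hα).F' x / (breatherPair α β c₁ c₂ hα).F x
      = β * tanh (β * (x + c₂)) := by
  simp only [breatherPair, tanh_eq_sinh_div_cosh, mul_div_assoc]

lemma abs_breatherPair_G_div_F_le (x : ℝ) :
    |(breatherPair α β c₁ c₂ hα).G x / (breatherPair α β c₁ c₂ hα).F x|
      ≤ |β / α| * (cosh (β * (x + c₂)))⁻¹ := by
  simp only [breatherPair, div_eq_mul_inv _ (cosh _), abs_mul, abs_inv, abs_of_pos (cosh_pos _)]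
  gcongr
  exact mul_le_of_le_one_right (abs_nonneg _) (abs_sin_le_one _)

lemma abs_breatherPair_G'_div_F_le (x : ℝ) :
    |(breatherPair α β c₁ c₂ hα).G' x / (breatherPair α β c₁ c₂ hα).F x|
      ≤ |β| * (cosh (β * (x + c₂)))⁻¹ := by
  simp only [breatherPair, div_eq_mul_inv _ (cosh _), abs_mul, abs_inv, abs_of_pos (cosh_pos _)]
  gcongr
  exact mul_le_of_le_one_right (abs_nonneg _) (abs_cos_le_one _)

lemma abs_breatherPair_argDeriv_le (x : ℝ) :
    |(breatherPair α β c₁ c₂ hα).argDeriv x|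
      ≤ (|β| + |β / α| * |β|) * (cosh (β * (x + c₂)))⁻¹ := by
  have hF' : |(breatherPair α β c₁ c₂ hα).F' x / (breatherPair α β c₁ c₂ hα).F x| ≤ |β| := by
    rw [breatherPair_F'_div_F, abs_mul]
    exact mul_le_of_le_one_right (abs_nonneg _) (abs_tanh_lt_one _).le
  calc _ ≤ _ := HirotaPair.abs_argDeriv_le _ x
    _ ≤ |β| * (cosh (β * (x + c₂)))⁻¹ + |β / α| * (cosh (β * (x + c₂)))⁻¹ * |β| := by
        gcongr
        exacts [abs_breatherPair_G'_div_F_le hα x, abs_breatherPair_G_div_F_le hα x]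
    _ = _ := by ring

lemma abs_breatherPair_sinTwoArg_le (x : ℝ) :
    |(breatherPair α β c₁ c₂ hα).sinTwoArg x| ≤ 2 * |β / α| * (cosh (β * (x + c₂)))⁻¹ := by
  rw [mul_assoc]
  exact (HirotaPair.abs_sinTwoArg_le _ x).trans
    (mul_le_mul_of_nonneg_left (abs_breatherPair_G_div_F_le hα x) zero_le_two)

lemma tendsto_breatherPair_energyPrimitive {l : Filter ℝ} {s : ℝ}
    (htanh : Tendsto (fun x => tanh (β * (x + c₂))) l (𝓝 s))
    (hcosh : Tendsto (fun x => cosh (β * (x + c₂))) l atTop) :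
    Tendsto (breatherPair α β c₁ c₂ hα).energyPrimitive l
      (𝓝 ((β * s) ^ 3 / 3 - (β ^ 2 - α ^ 2) / 2 * (β * s))) := by
  have hsech : ∀ K : ℝ, Tendsto (fun x => K * (cosh (β * (x + c₂)))⁻¹) l (𝓝 0) := fun K => by
    simpa using hcosh.inv_tendsto_atTop.const_mul K
  exact HirotaPair.tendsto_energyPrimitive _
    ((htanh.const_mul β).congr fun x => (breatherPair_F'_div_F hα x).symm)
    (squeeze_zero_norm (abs_breatherPair_G_div_F_le hα) (hsech _))
    (squeeze_zero_norm (abs_breatherPair_G'_div_F_le hα) (hsech _))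

lemma integrable_breatherPair_argDeriv_sq (hβ : β ≠ 0) :
    Integrable fun x => (breatherPair α β c₁ c₂ hα).argDeriv x ^ 2 :=
  integrable_sq_of_abs_le_inv_cosh (HirotaPair.continuous_argDeriv _) hβ
    (abs_breatherPair_argDeriv_le hα)

lemma integrable_breatherPair_sinTwoArg_sq (hβ : β ≠ 0) :
    Integrable fun x => (breatherPair α β c₁ c₂ hα).sinTwoArg x ^ 2 :=
  integrable_sq_of_abs_le_inv_cosh (HirotaPair.continuous_sinTwoArg _) hβ
    (abs_breatherPair_sinTwoArg_le hα)

lemma tendsto_breatherPair_energyPrimitive_atTop (hβ : 0 < β) :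
    Tendsto (breatherPair α β c₁ c₂ hα).energyPrimitive atTop
      (𝓝 (β ^ 3 / 3 - (β ^ 2 - α ^ 2) / 2 * β)) := by
  have hu : Tendsto (fun x => β * (x + c₂)) atTop atTop :=
    (tendsto_atTop_add_const_right _ c₂ tendsto_id).const_mul_atTop hβ
  simpa using tendsto_breatherPair_energyPrimitive hα (tendsto_tanh_atTop.comp hu)
    (tendsto_atTop_mono (fun x => abs_le_cosh _) (tendsto_abs_atTop_atTop.comp hu))

lemma tendsto_breatherPair_energyPrimitive_atBot (hβ : 0 < β) :
    Tendsto (breatherPair α β c₁ c₂ hα).energyPrimitive atBot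
      (𝓝 ((-β) ^ 3 / 3 - (β ^ 2 - α ^ 2) / 2 * (-β))) := by
  have hu : Tendsto (fun x => β * (x + c₂)) atBot atBot :=
    (tendsto_atBot_add_const_right _ c₂ tendsto_id).const_mul_atBot hβ
  simpa using tendsto_breatherPair_energyPrimitive hα (tendsto_tanh_atBot.comp hu)
    (tendsto_atTop_mono (fun x => abs_le_cosh _) (tendsto_abs_atBot_atTop.comp hu))

end BreatherPair

lemma breather_eq_argDeriv {α β : ℝ} (hα : α ≠ 0) (x₁ x₂ t x : ℝ) :
    breather α β x₁ x₂ t x = 2 * √2 *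
      (breatherPair α β ((α ^ 2 - 3 * β ^ 2) * t + x₁) ((3 * α ^ 2 - β ^ 2) * t + x₂)
        hα).argDeriv x := by
  rw [breather, ← (HirotaPair.hasDerivAt_arctan_div _ x).deriv]
  simp only [breatherPair, add_assoc]

lemma hasDerivAt_breather {α β : ℝ} (hα : α ≠ 0) (x₁ x₂ t x : ℝ) :
    HasDerivAt (breather α β x₁ x₂ t) (2 * √2 *
      (breatherPair α β ((α ^ 2 - 3 * β ^ 2) * t + x₁) ((3 * α ^ 2 - β ^ 2) * t + x₂)
        hα).argSecondDeriv x) x := by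
  rw [funext (breather_eq_argDeriv hα x₁ x₂ t)]
  exact (HirotaPair.hasDerivAt_argDeriv _ x).const_mul _

theorem breather_energy (α β : ℝ) (hα : 0 < α) (hβ : 0 < β) (t : ℝ) :
    (1 / 2 : ℝ) * (∫ x : ℝ, (deriv (fun y => breather α β 0 0 t y) x) ^ 2) -
      (1 / 4 : ℝ) * (∫ x : ℝ, (breather α β 0 0 t x) ^ 4)
      = (4 / 3) * β * (3 * α ^ 2 - β ^ 2) := by
  set P := breatherPair α β ((α ^ 2 - 3 * β ^ 2) * t + 0) ((3 * α ^ 2 - β ^ 2) * t + 0) hα.ne'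
  have hB : ∀ x, breather α β 0 0 t x = 2 * √2 * P.argDeriv x :=
    breather_eq_argDeriv hα.ne' 0 0 t
  have hBx : ∀ x, deriv (fun y => breather α β 0 0 t y) x = 2 * √2 * P.argSecondDeriv x :=
    fun x => (hasDerivAt_breather hα.ne' 0 0 t x).deriv
  have hab : 0 ≤ β ^ 2 + α ^ 2 := by positivity
  have hq : Integrable fun x => P.argDeriv x ^ 2 := integrable_breatherPair_argDeriv_sq _ hβ.ne'
  have hS : Integrable fun x => P.sinTwoArg x ^ 2 := integrable_breatherPair_sinTwoArg_sq _ hβ.ne'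
  have h4 := P.integrable_argDeriv_pow_four hab hq
  have h2 := P.integrable_argSecondDeriv_sq hab hq hS
  have hFTC := integral_of_hasDerivAt_of_tendsto P.hasDerivAt_energyPrimitive
    (h2.sub (h4.const_mul 4)) (tendsto_breatherPair_energyPrimitive_atBot _ hβ)
    (tendsto_breatherPair_energyPrimitive_atTop _ hβ)
  rw [integral_sub h2 (h4.const_mul 4), integral_const_mul] at hFTC
  have hsqrt : √2 ^ 2 = 2 := Real.sq_sqrt zero_le_two
  simp only [hBx]
  simp only [hB, mul_pow, integral_const_mul, show √2 ^ 4 = (√2 ^ 2) ^ 2 by ring, hsqrt]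
  linear_combination 4 * hFTC
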